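/- Let (D,X) be a Dyer system and let N : D → M(D,X) = ⊕_{ρ ∈ R} H_ρ be defined by N(g) = Σ_{i=1}^p a_i [ρ_i] for any syllabic expression (x_1^{a_1},…,x_p^{a_p}) of g, where ρ_i = x_1^{a_1}⋯x_{i-1}^{a_{i-1}} x_i x_{i-1}^{-a_{i-1}}⋯x_1^{-a_1}. Then N is a well-defined cocycle: N(gh) = N(g) + g·N(h) for all g, h ∈ D, and writing N(g) = Σ_ρ a_ρ(g)[ρ], the syllabic length of g equals the number of ρ ∈ R with a_ρ(g) ≠ 0. -/

import Mathlib

namespace Paper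

/-- The alternating list `(a, b, a, b, ...)` of length `m`. -/
def altList {α : Type*} (a b : α) : ℕ → List α
  | 0 => []
  | n + 1 => a :: altList b a n

/-- The alternating product `a b a ⋯` of length `m` in a monoid. -/
def altProd {G : Type*} [Monoid G] (a b : G) (m : ℕ) : G := (altList a b m).prod

variable {G : Type*} [Group G]

/-- The set of syllables of a generating set `X`: nontrivial powers of elements of `X`. -/
def Syll (X : Set G) : Set G := {s | ∃ x ∈ X, ∃ a : ℤ, s = x ^ a ∧ s ≠ 1}

/-- A syllabic word: a list all of whose entries are syllables. -/
def SylWord (X : Set G) (w : List G) : Prop := ∀ s ∈ w, s ∈ Syll X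

/-- The syllabic length of an element: minimal length of a syllabic word representing it. -/
noncomputable def sylLen (X : Set G) (g : G) : ℕ :=
  sInf {n | ∃ w : List G, SylWord X w ∧ w.prod = g ∧ w.length = n}

/-- A syllabic word is reduced if its length is the syllabic length of the element
it represents. -/
def Reduced (X : Set G) (w : List G) : Prop :=
  SylWord X w ∧ w.length = sylLen X w.prod

/-- Elementary M-operation of type I. -/
def MOpI (X : Set G) (w w' : List G) : Prop :=
  ∃ (w₁ w₂ : List G) (s t : G), s ∈ Syll X ∧ t ∈ Syll X ∧
    w = w₁ ++ [s, t] ++ w₂ ∧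
    ((s * t ∈ Syll X ∧ w' = w₁ ++ [s * t] ++ w₂) ∨ (s * t = 1 ∧ w' = w₁ ++ w₂))

/-- Elementary M-operation of type II. -/
def MOpII (X : Set G) (w w' : List G) : Prop :=
  ∃ (w₁ w₂ : List G) (s t : G) (m : ℕ), s ∈ Syll X ∧ t ∈ Syll X ∧ 2 ≤ m ∧
    altProd s t m = altProd t s m ∧ sylLen X (altProd s t m) = m ∧
    w = w₁ ++ altList s t m ++ w₂ ∧ w' = w₁ ++ altList t s m ++ w₂

/-- Elementary M-operation (of type I or type II). -/
def MOp (X : Set G) (w w' : List G) : Prop := MOpI X w w' ∨ MOpII X w w'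

/-- A syllabic word is M-reduced if its length cannot be shortened by any finite
sequence of elementary M-operations. -/
def MReduced (X : Set G) (w : List G) : Prop :=
  ∀ w', Relation.ReflTransGen (MOp X) w w' → ¬ w'.length < w.length

/-- Property D: a syllabic word is reduced iff it is M-reduced, and any two reduced
syllabic words representing the same element are connected by a finite sequence of
elementary M-operations of type II. -/
def PropertyD (X : Set G) : Prop :=
  (∀ w : List G, SylWord X w → (Reduced X w ↔ MReduced X w)) ∧
  (∀ w w' : List G, Reduced X w → Reduced X w' → w.prod = w'.prod →
    Relation.ReflTransGen (MOpII X) w w')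

/-- `(G, X)` is a marked group: `X` generates `G`. -/
def Marked (X : Set G) : Prop := Subgroup.closure X = ⊤

/-- `(G, X)` is a strongly marked group. -/
def StronglyMarked (X : Set G) : Prop :=
  Marked X ∧ (1 : G) ∉ X ∧
    ∀ x ∈ X, ∀ y ∈ X, ∀ a b : ℤ, x ^ a ≠ 1 → y ^ b ≠ 1 →
      (x ^ a * y ^ b ∈ Syll X ∨ x ^ a * y ^ b = 1) → x = y

/-- The data of a Dyer graph: a simplicial graph with edge labels `m ≥ 2` and vertex
labels `f ∈ ℕ_{≥2} ∪ {∞}` such that any edge with `m(e) ≠ 2` has both endpoints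
labelled `2`. -/
structure DyerData (V : Type*) where
  adj : V → V → Prop
  symm : ∀ u v, adj u v → adj v u
  loopless : ∀ v, ¬ adj v v
  m : V → V → ℕ
  m_symm : ∀ u v, m u v = m v u
  m_two_le : ∀ u v, adj u v → 2 ≤ m u v
  f : V → ℕ∞
  f_two_le : ∀ v, 2 ≤ f v
  dyer : ∀ u v, adj u v → m u v ≠ 2 → f u = 2 ∧ f v = 2

/-- The defining relators of the Dyer group of `Δ`. -/
def DyerData.rels {V : Type*} (Δ : DyerData V) : Set (FreeGroup V) :=
  {r | ∃ v, Δ.f v ≠ ⊤ ∧ r = (FreeGroup.of v) ^ (Δ.f v).toNat} ∪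
  {r | ∃ u v, Δ.adj u v ∧
    r = altProd (FreeGroup.of u) (FreeGroup.of v) (Δ.m u v) *
        (altProd (FreeGroup.of v) (FreeGroup.of u) (Δ.m u v))⁻¹}

/-- The Dyer group of the data `Δ`. -/
abbrev DyerGroup {V : Type*} (Δ : DyerData V) := PresentedGroup Δ.rels

/-- The standard generating set of a Dyer group. -/
def DyerGens {V : Type*} (Δ : DyerData V) : Set (DyerGroup Δ) :=
  Set.range (PresentedGroup.of (rels := Δ.rels))

/-!
A cocycle `N : D → M` is the same thing as a homomorphism `g ↦ (N g, g)` into `M ⋊ D`. The module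
`M(D, X)` is modelled inside `D → D`, the value at `ρ` being the `ρ`-component in `⟨ρ⟩`, and the
homomorphism is defined on generators by `x ↦ ([x], x)`. It respects the defining relations:
`x ^ f(x)` because `[x]` only has a coefficient in `⟨x⟩`; commuting generators because conjugation
by one fixes the reflection of the other; and the braid relation of two involutions `x, y`
because then `(x y) ^ m = 1`, so both sides have the same reflections `(x y) ^ j x`, met in
opposite orders. Multiplying out in the semidirect product gives `N(g) = Σ aᵢ [ρᵢ]`.

If `ρᵢ = ρⱼ` with `i < j` in a syllabic expression, the syllable `xᵢ ^ aᵢ` can be moved right past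
the syllables in between, where it becomes a power of `xⱼ` and merges with `xⱼ ^ aⱼ`. So the
reflections of a reduced expression are distinct, the coefficient of `ρᵢ` in `N(g)` is
`ρᵢ ^ aᵢ ≠ 1`, and the support of `N(g)` has exactly `lg(g)` elements.
-/

open Classical

section ConjSemidirect

variable (G) in
def conjArrowAut : G →* MulAut (G → G) where
  toFun g :=
    { toFun := fun f y => g * f (g⁻¹ * y * g) * g⁻¹
      invFun := fun f y => g⁻¹ * f (g * y * g⁻¹) * g
      left_inv := fun f => by ext; simp [mul_assoc]
      right_inv := fun f => by ext; simp [mul_assoc]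
      map_mul' := fun f f' => by ext; simp [mul_assoc] }
  map_one' := by ext; simp
  map_mul' g h := by ext; simp [mul_assoc]

@[simp]
lemma conjArrowAut_apply (g : G) (f : G → G) (y : G) :
    conjArrowAut G g f y = g * f (g⁻¹ * y * g) * g⁻¹ := rfl

variable (G) in
abbrev ConjSemidirect := (G → G) ⋊[conjArrowAut G] G

/-- The element `Σ_ρ c ρ • [ρ]` of `M(G, X)`. -/
def zpowFun (c : G → ℤ) : G → G := fun ρ => ρ ^ c ρ

lemma zpowFun_add (c c' : G → ℤ) : zpowFun (c + c') = zpowFun c * zpowFun c' := by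
  ext ρ; simp [zpowFun, zpow_add]

lemma conjArrowAut_zpowFun (g : G) (c : G → ℤ) :
    conjArrowAut G g (zpowFun c) = zpowFun fun ρ => c (g⁻¹ * ρ * g) := by
  ext ρ
  rw [conjArrowAut_apply, zpowFun, zpowFun, show g⁻¹ * ρ * g = MulAut.conj g⁻¹ ρ by simp,
    ← map_zpow]
  simp [mul_assoc]

end ConjSemidirect

section SyllableLift

lemma single_conj (g r : G) (b : ℤ) :
    (fun ρ => (Pi.single r b : G → ℤ) (g⁻¹ * ρ * g)) = Pi.single (g * r * g⁻¹) b := by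
  ext ρ
  have : g⁻¹ * ρ * g = r ↔ ρ = g * r * g⁻¹ := by
    rw [mul_assoc, inv_mul_eq_iff_eq_mul, ← eq_mul_inv_iff_mul_eq, mul_assoc]
  by_cases hρ : ρ = g * r * g⁻¹ <;> simp_all

lemma single_conj_of_commute {g r : G} (h : Commute g r) (b : ℤ) :
    (fun ρ => (Pi.single r b : G → ℤ) (g⁻¹ * ρ * g)) = Pi.single r b := by
  rw [single_conj, h.eq, mul_inv_cancel_right]

noncomputable def syllableLift (x : G) (a : ℤ) : ConjSemidirect G :=
  ⟨zpowFun (Pi.single x a), x ^ a⟩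

@[simp] lemma syllableLift_left (x : G) (a : ℤ) :
    (syllableLift x a).left = zpowFun (Pi.single x a) := rfl

@[simp] lemma syllableLift_right (x : G) (a : ℤ) : (syllableLift x a).right = x ^ a := rfl

lemma syllableLift_mul (x : G) (a b : ℤ) :
    syllableLift x a * syllableLift x b = syllableLift x (a + b) := by
  ext : 1
  · rw [SemidirectProduct.mul_left, syllableLift_left, syllableLift_left, syllableLift_right,
      conjArrowAut_zpowFun, single_conj_of_commute ((Commute.refl x).zpow_left a),
      syllableLift_left, Pi.single_add, zpowFun_add]
  · simp [zpow_add]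

lemma syllableLift_zero (x : G) : syllableLift x 0 = 1 := by
  ext : 1
  · ext ρ; simp [zpowFun]
  · simp

lemma syllableLift_one_zpow (x : G) (a : ℤ) : syllableLift x 1 ^ a = syllableLift x a := by
  induction a using Int.induction_on with
  | zero => rw [zpow_zero, syllableLift_zero]
  | succ n ih => rw [zpow_add_one, ih, syllableLift_mul]
  | pred n ih =>
    have hinv : (syllableLift x 1)⁻¹ = syllableLift x (-1) :=
      inv_eq_of_mul_eq_one_right (by rw [syllableLift_mul, add_neg_cancel, syllableLift_zero])
    rw [zpow_sub_one, ih, hinv, syllableLift_mul, sub_eq_add_neg]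

lemma syllableLift_eq_one {x : G} {a : ℤ} (h : x ^ a = 1) : syllableLift x a = 1 := by
  ext : 1
  · ext ρ
    by_cases hρ : ρ = x <;> simp_all [zpowFun]
  · simpa using h

lemma syllableLift_commute {x y : G} (h : Commute x y) (a b : ℤ) :
    Commute (syllableLift x a) (syllableLift y b) := by
  ext : 1
  · simp only [SemidirectProduct.mul_left, syllableLift_left, syllableLift_right,
      conjArrowAut_zpowFun, single_conj_of_commute (h.zpow_left a),
      single_conj_of_commute (h.symm.zpow_left b), ← zpowFun_add, add_comm]
  · simpa using (h.zpow_zpow a b).eq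

end SyllableLift

section Dihedral

lemma altProd_succ {M : Type*} [Monoid M] (a b : M) (n : ℕ) :
    altProd a b (n + 1) = a * altProd b a n := by
  simp [altProd, altList]

lemma map_altProd {M N : Type*} [Monoid M] [Monoid N] (f : M →* N) (a b : M) (n : ℕ) :
    f (altProd a b n) = altProd (f a) (f b) n := by
  induction n generalizing a b with
  | zero => simp [altProd, altList]
  | succ n ih => rw [altProd_succ, map_mul, ih, altProd_succ]

lemma mul_pow_mul_comm (x y : G) (n : ℕ) : x * (y * x) ^ n = (x * y) ^ n * x :=
  (SemiconjBy.pow_right (by simp [SemiconjBy, mul_assoc]) n).eq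

variable {x y : G}

lemma altProd_mul_inv_altProd (hx : x⁻¹ = x) (hy : y⁻¹ = y) (m : ℕ) :
    altProd x y m * (altProd y x m)⁻¹ = (x * y) ^ m := by
  induction m generalizing x y with
  | zero => simp [altProd, altList]
  | succ m ih =>
    calc altProd x y (m + 1) * (altProd y x (m + 1))⁻¹
        = x * (altProd y x m * (altProd x y m)⁻¹) * y⁻¹ := by
          rw [altProd_succ, altProd_succ]; group
      _ = (x * y) ^ (m + 1) := by
          rw [ih hy hx, hy, mul_pow_mul_comm, pow_succ, mul_assoc]

lemma altProd_syllableLift_left (hx : x⁻¹ = x) (hy : y⁻¹ = y) (m : ℕ) :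
    (altProd (syllableLift x 1) (syllableLift y 1) m).left =
      zpowFun (∑ j ∈ Finset.range m, Pi.single ((x * y) ^ j * x) 1) := by
  induction m generalizing x y with
  | zero => ext; simp [altProd, altList, zpowFun]
  | succ m ih =>
    rw [altProd_succ, SemidirectProduct.mul_left, ih hy hx, syllableLift_left, syllableLift_right,
      zpow_one, conjArrowAut_zpowFun, Finset.sum_range_succ', add_comm, zpowFun_add]
    congr 2
    · simp
    ext ρ
    simp only [Finset.sum_apply]
    refine Finset.sum_congr rfl fun j _ => ?_
    rw [congrFun (single_conj x ((y * x) ^ j * y) 1) ρ, hx, pow_succ', mul_assoc x y,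
      mul_pow_mul_comm y x, mul_assoc]

lemma altProd_syllableLift_eq_of_involutive (hx : x⁻¹ = x) (hy : y⁻¹ = y) {m : ℕ}
    (h : altProd x y m = altProd y x m) :
    altProd (syllableLift x 1) (syllableLift y 1) m =
      altProd (syllableLift y 1) (syllableLift x 1) m := by
  have hm : (x * y) ^ m = 1 := by rw [← altProd_mul_inv_altProd hx hy, h, mul_inv_cancel]
  have hrefl : ∀ j < m, (y * x) ^ j * y = (x * y) ^ (m - 1 - j) * x := by
    intro j hj
    have hxx : x * x = 1 := by simpa [hx] using inv_mul_cancel x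
    have hpow : (x * y) ^ (m - 1 - j) = (y * x) ^ (j + 1) := by
      rw [← inv_inv (y * x), mul_inv_rev, hx, hy, inv_pow, eq_inv_iff_mul_eq_one, ← pow_add,
        show m - 1 - j + (j + 1) = m by omega, hm]
    rw [hpow, pow_succ, mul_assoc, mul_assoc, hxx, mul_one]
  ext : 1
  · rw [altProd_syllableLift_left hx hy, altProd_syllableLift_left hy hx,
      ← Finset.sum_range_reflect]
    exact congrArg zpowFun (Finset.sum_congr rfl fun j hj => by
      rw [hrefl j (Finset.mem_range.mp hj)])
  · change SemidirectProduct.rightHom _ = SemidirectProduct.rightHom _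
    rw [map_altProd, map_altProd]
    simpa using h

end Dihedral

section SyllabicExpression

variable {p : ℕ}

def syllRefl (x : Fin p → G) (a : Fin p → ℤ) (i : Fin p) : G :=
  ((List.ofFn fun j => x j ^ a j).take i).prod * x i *
    (((List.ofFn fun j => x j ^ a j).take i).prod)⁻¹

/-- The coefficients `a_ρ(g)` of `N(g)`, read off a syllabic expression of `g`. -/
noncomputable def syllCoeff (x : Fin p → G) (a : Fin p → ℤ) : G → ℤ :=
  ∑ i, Pi.single (syllRefl x a i) (a i)

variable (x : Fin (p + 1) → G) (a : Fin (p + 1) → ℤ)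

@[simp] lemma syllRefl_zero : syllRefl x a 0 = x 0 := by
  simp [syllRefl]

lemma syllRefl_succ (i : Fin p) :
    syllRefl x a i.succ =
      x 0 ^ a 0 * syllRefl (fun i => x i.succ) (fun i => a i.succ) i * (x 0 ^ a 0)⁻¹ := by
  simp only [syllRefl, List.ofFn_succ, Fin.val_succ, List.take_succ_cons, List.prod_cons,
    mul_inv_rev, mul_assoc]

lemma syllCoeff_succ :
    syllCoeff x a = Pi.single (x 0) (a 0) + fun ρ =>
      syllCoeff (fun i => x i.succ) (fun i => a i.succ) ((x 0 ^ a 0)⁻¹ * ρ * x 0 ^ a 0) := by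
  ext ρ
  simp only [syllCoeff, Fin.sum_univ_succ, syllRefl_zero, syllRefl_succ, Pi.add_apply,
    Finset.sum_apply, ← single_conj]

end SyllabicExpression

lemma prod_syllableLift_left {p : ℕ} (x : Fin p → G) (a : Fin p → ℤ) :
    ((List.ofFn fun i => syllableLift (x i) (a i)).prod).left = zpowFun (syllCoeff x a) := by
  induction p with
  | zero => ext; simp [syllCoeff, zpowFun]
  | succ p ih =>
    rw [List.ofFn_succ, List.prod_cons, SemidirectProduct.mul_left, ih, syllableLift_left,
      syllableLift_right, conjArrowAut_zpowFun, ← zpowFun_add, ← syllCoeff_succ]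

section Shortening

variable {X : Set G} {p : ℕ}

lemma sylWord_ofFn {x : Fin p → G} {a : Fin p → ℤ} (hx : ∀ i, x i ∈ X)
    (ha : ∀ i, x i ^ a i ≠ 1) : SylWord X (List.ofFn fun i => x i ^ a i) := by
  intro s hs
  obtain ⟨i, rfl⟩ := List.mem_ofFn.mp hs
  exact ⟨x i, hx i, a i, rfl, ha i⟩

lemma sylLen_prod_le_length {w : List G} (hw : SylWord X w) : sylLen X w.prod ≤ w.length :=
  Nat.sInf_le ⟨w, hw, rfl, rfl⟩

lemma exists_sylWord_zpow_mul {x : G} (hx : x ∈ X) (a : ℤ) {w : List G} (hw : SylWord X w) :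
    ∃ w', SylWord X w' ∧ w'.length ≤ w.length + 1 ∧ w'.prod = x ^ a * w.prod := by
  by_cases h : x ^ a = 1
  · exact ⟨w, hw, by omega, by rw [h, one_mul]⟩
  · refine ⟨x ^ a :: w, ?_, le_rfl, List.prod_cons⟩
    rintro s (_ | ⟨_, hs⟩)
    exacts [⟨x, hx, a, rfl, h⟩, hw s hs]

variable {x : Fin p → G} {a : Fin p → ℤ}

lemma exists_sylWord_zpow_syllRefl_mul (hx : ∀ i, x i ∈ X) (ha : ∀ i, x i ^ a i ≠ 1)
    (i : Fin p) (b : ℤ) : ∃ w, SylWord X w ∧ w.length ≤ p ∧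
      w.prod = syllRefl x a i ^ b * (List.ofFn fun j => x j ^ a j).prod := by
  induction p with
  | zero => exact i.elim0
  | succ p ih =>
    rw [List.ofFn_succ, List.prod_cons]
    cases i using Fin.cases with
    | zero =>
      have hw := sylWord_ofFn (X := X) (fun i => hx i.succ) (fun i => ha i.succ)
      obtain ⟨w, hw, hlen, hprod⟩ := exists_sylWord_zpow_mul (hx 0) (b + a 0) hw
      refine ⟨w, hw, by simpa using hlen, ?_⟩
      rw [hprod, syllRefl_zero, zpow_add, mul_assoc]
    | succ i =>
      obtain ⟨w, hw, hlen, hprod⟩ :=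
        ih (fun i => hx i.succ) (fun i => ha i.succ) i
      refine ⟨x 0 ^ a 0 :: w, ?_, by simpa using hlen, ?_⟩
      · rintro s (_ | ⟨_, hs⟩)
        exacts [⟨x 0, hx 0, a 0, rfl, ha 0⟩, hw s hs]
      · rw [List.prod_cons, hprod, syllRefl_succ, conj_zpow]
        group

lemma exists_sylWord_length_lt_of_not_injective (hx : ∀ i, x i ∈ X) (ha : ∀ i, x i ^ a i ≠ 1)
    (h : ¬ Function.Injective (syllRefl x a)) : ∃ w, SylWord X w ∧ w.length < p ∧
      w.prod = (List.ofFn fun j => x j ^ a j).prod := by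
  induction p with
  | zero => exact absurd (Function.injective_of_subsingleton _) h
  | succ p ih =>
    set s := x 0 ^ a 0
    have hcons : syllRefl x a = Fin.cons (x 0)
        (fun i => s * syllRefl (fun i => x i.succ) (fun i => a i.succ) i * s⁻¹) := by
      ext i
      cases i using Fin.cases <;> simp [syllRefl_succ, s]
    rw [hcons, Fin.cons_injective_iff, not_and_or, not_not] at h
    rw [List.ofFn_succ, List.prod_cons]
    rcases h with ⟨i, hi⟩ | h
    · have hi : syllRefl (fun i => x i.succ) (fun i => a i.succ) i = x 0 := by
        have hfix : s * x 0 * s⁻¹ = x 0 := by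
          rw [((Commute.refl (x 0)).zpow_left (a 0)).eq, mul_inv_cancel_right]
        exact mul_left_cancel (mul_right_cancel (hi.trans hfix.symm))
      obtain ⟨w, hw, hlen, hprod⟩ :=
        exists_sylWord_zpow_syllRefl_mul (fun i => hx i.succ) (fun i => ha i.succ) i (a 0)
      exact ⟨w, hw, by simpa using Nat.lt_succ_of_le hlen, by rw [hprod, hi]⟩
    · have h : ¬ Function.Injective (syllRefl (fun i => x i.succ) (fun i => a i.succ)) :=
        fun hinj => h ((MulAut.conj s).injective.comp hinj)
      obtain ⟨w, hw, hlen, hprod⟩ := ih (fun i => hx i.succ) (fun i => ha i.succ) h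
      refine ⟨s :: w, ?_, by simpa using hlen, by rw [List.prod_cons, hprod]⟩
      rintro t (_ | ⟨_, ht⟩)
      exacts [⟨x 0, hx 0, a 0, rfl, ha 0⟩, hw t ht]

lemma syllRefl_injective (hx : ∀ i, x i ∈ X) (ha : ∀ i, x i ^ a i ≠ 1)
    (hp : p ≤ sylLen X (List.ofFn fun j => x j ^ a j).prod) :
    Function.Injective (syllRefl x a) := by
  by_contra h
  obtain ⟨w, hw, hlen, hprod⟩ := exists_sylWord_length_lt_of_not_injective hx ha h
  have := sylLen_prod_le_length hw
  rw [hprod] at this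
  omega

end Shortening

section Support

variable {p : ℕ} {x : Fin p → G} {a : Fin p → ℤ}

lemma prod_ofFn_zpow (ρ : G) (b : Fin p → ℤ) :
    (List.ofFn fun i => ρ ^ b i).prod = ρ ^ ∑ i, b i := by
  induction p with
  | zero => simp
  | succ p ih => rw [List.ofFn_succ, List.prod_cons, ih, Fin.sum_univ_succ, zpow_add]

lemma zpowFun_syllCoeff_apply (ρ : G) : zpowFun (syllCoeff x a) ρ =
    (List.ofFn fun i => if syllRefl x a i = ρ then ρ ^ a i else 1).prod := by
  rw [zpowFun, syllCoeff, Finset.sum_apply, ← prod_ofFn_zpow]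
  refine congrArg (List.prod ∘ List.ofFn) (funext fun i => ?_)
  by_cases h : syllRefl x a i = ρ <;> simp [h, Ne.symm]

lemma mulSupport_zpowFun_syllCoeff_subset :
    Function.mulSupport (zpowFun (syllCoeff x a)) ⊆ Set.range (syllRefl x a) := by
  intro ρ hρ
  by_contra h
  refine hρ ?_
  have : syllCoeff x a ρ = 0 := by
    rw [syllCoeff, Finset.sum_apply]
    exact Finset.sum_eq_zero fun i _ => Pi.single_eq_of_ne (fun hi => h ⟨i, hi.symm⟩) _
  simp [zpowFun, this]

lemma mulSupport_zpowFun_syllCoeff (ha : ∀ i, x i ^ a i ≠ 1)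
    (hinj : Function.Injective (syllRefl x a)) :
    Function.mulSupport (zpowFun (syllCoeff x a)) = Set.range (syllRefl x a) := by
  refine mulSupport_zpowFun_syllCoeff_subset.antisymm ?_
  rintro _ ⟨k, rfl⟩
  have hcoeff : syllCoeff x a (syllRefl x a k) = a k := by
    rw [syllCoeff, Finset.sum_apply, Finset.sum_eq_single k (fun i _ hik =>
      Pi.single_eq_of_ne (hinj.ne hik).symm _) (by simp), Pi.single_eq_same]
  rw [Function.mem_mulSupport, zpowFun, hcoeff, syllRefl, conj_zpow]
  simpa using ha k

end Support

section MinimalExpression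

variable {X : Set G}

lemma inv_mem_syll {s : G} (hs : s ∈ Syll X) : s⁻¹ ∈ Syll X := by
  obtain ⟨x, hx, a, rfl, hne⟩ := hs
  exact ⟨x, hx, -a, (zpow_neg x a).symm, inv_ne_one.mpr hne⟩

lemma exists_sylWord_prod_eq (hX : Marked X) (g : G) : ∃ w, SylWord X w ∧ w.prod = g := by
  have hX_le : X ⊆ Subgroup.closure (Syll X) := fun x hx => by
    by_cases h : x = 1
    · exact h ▸ one_mem _
    · exact Subgroup.subset_closure ⟨x, hx, 1, (zpow_one x).symm, h⟩
  have hg : g ∈ (Subgroup.closure (Syll X)).toSubmonoid :=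
    (Subgroup.closure_le _).mpr hX_le (hX ▸ Subgroup.mem_top g)
  rw [Subgroup.closure_toSubmonoid, Set.union_eq_left.mpr fun s hs => by
    simpa using inv_mem_syll hs] at hg
  obtain ⟨w, hw, rfl⟩ := Submonoid.exists_list_of_mem_closure hg
  exact ⟨w, hw, rfl⟩

lemma exists_ofFn_eq_of_sylWord {w : List G} (hw : SylWord X w) :
    ∃ (x : Fin w.length → G) (a : Fin w.length → ℤ), (∀ i, x i ∈ X) ∧
      (∀ i, x i ^ a i ≠ 1) ∧ List.ofFn (fun i => x i ^ a i) = w := by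
  choose x hx a hxa hne using fun i : Fin w.length => hw (w.get i) (List.get_mem w i)
  exact ⟨x, a, hx, fun i => hxa i ▸ hne i, by simp [← hxa]⟩

lemma exists_syllabic_expression_length_eq_sylLen (hX : Marked X) (g : G) :
    ∃ (p : ℕ) (x : Fin p → G) (a : Fin p → ℤ), (∀ i, x i ∈ X) ∧ (∀ i, x i ^ a i ≠ 1) ∧
      (List.ofFn fun i => x i ^ a i).prod = g ∧ p = sylLen X g := by
  obtain ⟨w, hw, hprod⟩ := exists_sylWord_prod_eq hX g
  obtain ⟨w, hw, hprod, hlen⟩ :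
      sylLen X g ∈ {n | ∃ w : List G, SylWord X w ∧ w.prod = g ∧ w.length = n} :=
    Nat.sInf_mem ⟨w.length, w, hw, hprod, rfl⟩
  obtain ⟨x, a, hx, ha, hw⟩ := exists_ofFn_eq_of_sylWord hw
  exact ⟨_, x, a, hx, ha, by rw [hw, hprod], hlen⟩

end MinimalExpression

namespace DyerData

variable {V : Type*} (Δ : DyerData V)

lemma of_pow_toNat_eq_one {v : V} (hv : Δ.f v ≠ ⊤) :
    (PresentedGroup.of v : DyerGroup Δ) ^ (Δ.f v).toNat = 1 := by
  have h := PresentedGroup.one_of_mem (rels := Δ.rels) (Or.inl ⟨v, hv, rfl⟩)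
  rwa [map_pow] at h

lemma of_inv_eq_of_f_eq_two {v : V} (hv : Δ.f v = 2) :
    (PresentedGroup.of v : DyerGroup Δ)⁻¹ = PresentedGroup.of v := by
  have h := Δ.of_pow_toNat_eq_one (v := v) (by simp [hv])
  rw [hv, show (2 : ℕ∞).toNat = 2 from rfl, sq] at h
  exact inv_eq_of_mul_eq_one_right h

lemma altProd_of_eq {u v : V} (h : Δ.adj u v) :
    altProd (PresentedGroup.of u : DyerGroup Δ) (PresentedGroup.of v) (Δ.m u v) =
      altProd (PresentedGroup.of v) (PresentedGroup.of u) (Δ.m u v) := by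
  have hr := PresentedGroup.mk_eq_mk_of_mul_inv_mem (rels := Δ.rels) (Or.inr ⟨u, v, h, rfl⟩)
  rwa [map_altProd, map_altProd] at hr

noncomputable def cocycleLift : DyerGroup Δ →* ConjSemidirect (DyerGroup Δ) :=
  PresentedGroup.toGroup (f := fun v => syllableLift (PresentedGroup.of v) 1) <| by
    rintro r (⟨v, hv, rfl⟩ | ⟨u, v, huv, rfl⟩)
    · rw [map_pow, FreeGroup.lift_apply_of, ← zpow_natCast, syllableLift_one_zpow,
        syllableLift_eq_one (by exact_mod_cast Δ.of_pow_toNat_eq_one hv)]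
    · rw [map_mul, map_inv, mul_inv_eq_one, map_altProd, map_altProd, FreeGroup.lift_apply_of,
        FreeGroup.lift_apply_of]
      by_cases hm : Δ.m u v = 2
      · have hc := Δ.altProd_of_eq huv
        simp only [hm, altProd, altList, List.prod_cons, List.prod_nil, mul_one] at hc ⊢
        exact (syllableLift_commute hc 1 1).eq
      · obtain ⟨hu, hv⟩ := Δ.dyer u v huv hm
        exact altProd_syllableLift_eq_of_involutive (Δ.of_inv_eq_of_f_eq_two hu)
          (Δ.of_inv_eq_of_f_eq_two hv) (Δ.altProd_of_eq huv)

lemma cocycleLift_right (g : DyerGroup Δ) : (Δ.cocycleLift g).right = g := by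
  have h : SemidirectProduct.rightHom.comp Δ.cocycleLift = MonoidHom.id _ :=
    PresentedGroup.ext fun v => by simp [cocycleLift]
  exact DFunLike.congr_fun h g

lemma cocycleLift_prod_left {p : ℕ} {x : Fin p → DyerGroup Δ} (hx : ∀ i, x i ∈ DyerGens Δ)
    (a : Fin p → ℤ) :
    (Δ.cocycleLift (List.ofFn fun i => x i ^ a i).prod).left = zpowFun (syllCoeff x a) := by
  have hsyl : ∀ i, Δ.cocycleLift (x i ^ a i) = syllableLift (x i) (a i) := fun i => by
    obtain ⟨v, hv⟩ := hx i
    rw [map_zpow, ← hv, cocycleLift, PresentedGroup.toGroup.of, syllableLift_one_zpow]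
  rw [map_list_prod, List.map_ofFn, Function.comp_def]
  simp only [hsyl, prod_syllableLift_left]

end DyerData

open Classical in
theorem statement_6 {V : Type*} (Δ : DyerData V)
    (X : Set (DyerGroup Δ)) (hX : X = DyerGens Δ)
    (R : Set (DyerGroup Δ)) (hR : R = {d | ∃ g : DyerGroup Δ, ∃ x ∈ X, d = g * x * g⁻¹}) :
    ∃ N : DyerGroup Δ → (R → DyerGroup Δ),
      -- values of the `ρ`-component lie in the cyclic group generated by `ρ`
      (∀ (g : DyerGroup Δ) (ρ : R), N g ρ ∈ Subgroup.zpowers ρ.1) ∧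
      -- finite support
      (∀ g, {ρ : R | N g ρ ≠ 1}.Finite) ∧
      -- N is computed by any syllabic expression: N(g) = Σ_i a_i [ρ_i]
      (∀ (p : ℕ) (x : Fin p → DyerGroup Δ), (∀ i, x i ∈ X) →
        ∀ (a : Fin p → ℤ), (∀ i, x i ^ a i ≠ 1) →
        ∀ ρ : R,
          N (List.ofFn fun i => x i ^ a i).prod ρ =
            (List.ofFn fun i : Fin p =>
              if ((List.ofFn fun j => x j ^ a j).take i).prod * x i *
                  (((List.ofFn fun j => x j ^ a j).take i).prod)⁻¹ = (ρ : DyerGroup Δ)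
              then (ρ : DyerGroup Δ) ^ a i else 1).prod) ∧
      -- cocycle condition N(gh) = N(g) + g ⋅ N(h)
      (∀ g h : DyerGroup Δ, ∀ ρ ρ' : R, (ρ' : DyerGroup Δ) = g⁻¹ * ρ * g →
        N (g * h) ρ = N g ρ * (g * N h ρ' * g⁻¹)) ∧
      -- syllabic length equals the number of nonzero components
      (∀ g, sylLen X g = {ρ : R | N g ρ ≠ 1}.ncard) := by
  subst hX hR
  have hmarked : Marked (DyerGens Δ) := PresentedGroup.closure_range_of _
  refine ⟨fun g ρ => (Δ.cocycleLift g).left ρ, fun g ρ => ?_, fun g => ?_,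
    fun p x hx a _ ρ => ?_, fun g h ρ ρ' hρ' => ?_, fun g => ?_⟩ <;> beta_reduce
  · obtain ⟨p, x, a, hx, -, rfl, -⟩ := exists_syllabic_expression_length_eq_sylLen hmarked g
    rw [Δ.cocycleLift_prod_left hx]
    exact zpow_mem (Subgroup.mem_zpowers _) _
  · obtain ⟨p, x, a, hx, -, rfl, -⟩ := exists_syllabic_expression_length_eq_sylLen hmarked g
    rw [Δ.cocycleLift_prod_left hx]
    exact ((Set.finite_range _).subset mulSupport_zpowFun_syllCoeff_subset).preimage
      Subtype.val_injective.injOn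
  · rw [Δ.cocycleLift_prod_left hx]
    exact zpowFun_syllCoeff_apply _
  · rw [map_mul, SemidirectProduct.mul_left, Δ.cocycleLift_right, Pi.mul_apply,
      conjArrowAut_apply, hρ']
  · obtain ⟨p, x, a, hx, ha, rfl, hp⟩ := exists_syllabic_expression_length_eq_sylLen hmarked g
    have hinj := syllRefl_injective hx ha hp.le
    change sylLen _ _ = (Subtype.val ⁻¹' Function.mulSupport _).ncard
    rw [← hp, Δ.cocycleLift_prod_left hx, mulSupport_zpowFun_syllCoeff ha hinj,
      Set.ncard_preimage_of_injective_subset_range Subtype.val_injective,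
      Set.ncard_range_of_injective hinj, Nat.card_fin]
    rintro _ ⟨i, rfl⟩
    exact ⟨⟨_, _, x i, hx i, rfl⟩, rfl⟩

end Paper
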